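/- lim_{n→∞} ∏_{k=1}^{n} (4(n-1)^4 - (8k-6)(n-1)^2 + 4k^2 - 6k + 2)/(n(n-1)(2n-1)^2) = e^{-3}. -/

import Mathlib

/-!
Write the `k`-th factor as `1 + u n k`. Then `|u n k| ≤ 57 / n` for `1 ≤ k ≤ n`, so
`∑ k, u n k ^ 2 = O(1 / n)`, while `∑ k, u n k` is an explicit rational function of `n` with
limit `-12 / 4 = -3`. Since `log (1 + u) = u + O(u ^ 2)`, the logarithm of the product tends
to `-3`.
-/

open Filter Finset Topology

lemma Real.abs_log_one_add_sub_self_le {x : ℝ} (hx : |x| ≤ 1 / 2) :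
    |Real.log (1 + x) - x| ≤ 2 * x ^ 2 := by
  have h := Real.abs_log_sub_add_sum_range_le (x := -x) (by rw [abs_neg]; linarith) 1
  simp only [range_one, sum_singleton, abs_neg, sub_neg_eq_add] at h
  calc |Real.log (1 + x) - x| = |-x + Real.log (1 + x)| := by ring_nf
    _ ≤ |x| ^ 2 / (1 - |x|) := by simpa using h
    _ ≤ 2 * x ^ 2 := by
      rw [div_le_iff₀ (by linarith), sq_abs]
      nlinarith [sq_nonneg x]

section ProductLimit

variable {α ι : Type*} {l : Filter α} {s : α → Finset ι} {u : α → ι → ℝ} {L : ℝ}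

lemma eventually_forall_abs_le_half_of_tendsto_sum_sq
    (hsq : Tendsto (fun a ↦ ∑ i ∈ s a, u a i ^ 2) l (𝓝 0)) :
    ∀ᶠ a in l, ∀ i ∈ s a, |u a i| ≤ 1 / 2 := by
  filter_upwards [hsq.eventually (ge_mem_nhds (show (0 : ℝ) < 1 / 4 by norm_num))] with a ha i hi
  have hui : u a i ^ 2 ≤ (1 / 2) ^ 2 :=
    (single_le_sum (fun j _ ↦ sq_nonneg (u a j)) hi).trans (by linarith)
  simpa using sq_le_sq.mp hui

lemma tendsto_sum_log_one_add_of_tendsto_sum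
    (hsum : Tendsto (fun a ↦ ∑ i ∈ s a, u a i) l (𝓝 L))
    (hsq : Tendsto (fun a ↦ ∑ i ∈ s a, u a i ^ 2) l (𝓝 0)) :
    Tendsto (fun a ↦ ∑ i ∈ s a, Real.log (1 + u a i)) l (𝓝 L) := by
  have herr : Tendsto (fun a ↦ ∑ i ∈ s a, Real.log (1 + u a i) - ∑ i ∈ s a, u a i) l (𝓝 0) := by
    refine squeeze_zero_norm' ?_ (by simpa using hsq.const_mul 2)
    filter_upwards [eventually_forall_abs_le_half_of_tendsto_sum_sq hsq] with a ha
    rw [Real.norm_eq_abs, ← sum_sub_distrib, mul_sum]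
    exact (abs_sum_le_sum_abs _ _).trans
      (sum_le_sum fun i hi ↦ Real.abs_log_one_add_sub_self_le (ha i hi))
  simpa using herr.add hsum

theorem tendsto_prod_one_add_of_tendsto_sum
    (hsum : Tendsto (fun a ↦ ∑ i ∈ s a, u a i) l (𝓝 L))
    (hsq : Tendsto (fun a ↦ ∑ i ∈ s a, u a i ^ 2) l (𝓝 0)) :
    Tendsto (fun a ↦ ∏ i ∈ s a, (1 + u a i)) l (𝓝 (Real.exp L)) := by
  refine ((Real.continuous_exp.tendsto L).comp
    (tendsto_sum_log_one_add_of_tendsto_sum hsum hsq)).congr' ?_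
  filter_upwards [eventually_forall_abs_le_half_of_tendsto_sum_sq hsq] with a ha
  rw [Function.comp_apply, Real.exp_sum]
  refine prod_congr rfl fun i hi ↦ Real.exp_log ?_
  linarith [(abs_le.mp (ha i hi)).1]

end ProductLimit

noncomputable def factorNum (x y : ℝ) : ℝ :=
  4 * (x - 1) ^ 4 - (8 * y - 6) * (x - 1) ^ 2 + 4 * y ^ 2 - 6 * y + 2

noncomputable def factorDen (x : ℝ) : ℝ := x * (x - 1) * (2 * x - 1) ^ 2

noncomputable def excess (x y : ℝ) : ℝ := factorNum x y / factorDen x - 1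

lemma factorNum_sub_factorDen (x y : ℝ) :
    factorNum x y - factorDen x =
      4 * y ^ 2 - (8 * x ^ 2 - 16 * x + 14) * y - (8 * x ^ 3 - 25 * x ^ 2 + 27 * x - 12) := by
  unfold factorNum factorDen; ring

lemma two_mul_pow_four_le_factorDen {x : ℝ} (hx : 4 ≤ x) : 2 * x ^ 4 ≤ factorDen x := by
  unfold factorDen; nlinarith [sq_nonneg x, sq_nonneg (x - 4)]

lemma factorDen_pos {x : ℝ} (hx : 4 ≤ x) : 0 < factorDen x :=
  (by positivity : (0 : ℝ) < 2 * x ^ 4).trans_le (two_mul_pow_four_le_factorDen hx)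

lemma abs_factorNum_sub_factorDen_le {x y : ℝ} (hy : 1 ≤ y) (hyx : y ≤ x) :
    |factorNum x y - factorDen x| ≤ 114 * x ^ 3 := by
  rw [factorNum_sub_factorDen, abs_le]
  constructor <;> nlinarith [mul_le_mul_of_nonneg_left hyx (by linarith : (0 : ℝ) ≤ y),
    mul_le_mul_of_nonneg_left hyx (by linarith : (0 : ℝ) ≤ x), sq_nonneg (x - 1), sq_nonneg (y - 1)]

lemma abs_excess_le {x y : ℝ} (hx : 4 ≤ x) (hy : 1 ≤ y) (hyx : y ≤ x) :
    |excess x y| ≤ 57 / x := by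
  have hd := factorDen_pos hx
  rw [excess, div_sub_one hd.ne', abs_div, abs_of_pos hd, div_le_div_iff₀ hd (by linarith)]
  calc |factorNum x y - factorDen x| * x ≤ 114 * x ^ 3 * x := by
        gcongr; exact abs_factorNum_sub_factorDen_le hy hyx
    _ = 57 * (2 * x ^ 4) := by ring
    _ ≤ 57 * factorDen x := by gcongr; exact two_mul_pow_four_le_factorDen hx

lemma sum_Icc_quadratic (a b c : ℝ) (n : ℕ) :
    ∑ k ∈ Icc 1 n, (a + b * k + c * (k : ℝ) ^ 2) =
      a * n + b * (n * (n + 1) / 2) + c * (n * (n + 1) * (2 * n + 1) / 6) := by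
  induction n with
  | zero => simp
  | succ m ih =>
    rw [sum_Icc_succ_top (Nat.le_add_left 1 m), ih]
    push_cast; ring

lemma sum_excess_eq {n : ℕ} (hn : 4 ≤ n) :
    ∑ k ∈ Icc 1 n, excess n k =
      (-12 + 91 / 3 * (n : ℝ)⁻¹ - 24 * (n : ℝ)⁻¹ ^ 2 + 17 / 3 * (n : ℝ)⁻¹ ^ 3) /
        (4 - 8 * (n : ℝ)⁻¹ + 5 * (n : ℝ)⁻¹ ^ 2 - (n : ℝ)⁻¹ ^ 3) := by
  have hx : (4 : ℝ) ≤ n := by exact_mod_cast hn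
  have hd := factorDen_pos hx
  have hsum : ∑ k ∈ Icc 1 n, (factorNum n k - factorDen n) =
      -12 * (n : ℝ) ^ 4 + 91 / 3 * n ^ 3 - 24 * n ^ 2 + 17 / 3 * n := by
    simp_rw [factorNum_sub_factorDen]
    convert sum_Icc_quadratic (-(8 * (n : ℝ) ^ 3 - 25 * n ^ 2 + 27 * n - 12))
      (-(8 * (n : ℝ) ^ 2 - 16 * n + 14)) 4 n using 1
    · exact sum_congr rfl fun k _ ↦ by ring
    · ring
  simp_rw [excess, div_sub_one hd.ne', ← sum_div, hsum]
  unfold factorDen at hd ⊢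
  field_simp
  ring

lemma tendsto_sum_excess :
    Tendsto (fun n : ℕ ↦ ∑ k ∈ Icc 1 n, excess n k) atTop (𝓝 (-3)) := by
  let f : ℝ → ℝ := fun t ↦ (-12 + 91 / 3 * t - 24 * t ^ 2 + 17 / 3 * t ^ 3) /
    (4 - 8 * t + 5 * t ^ 2 - t ^ 3)
  have hf : ContinuousAt f 0 := by fun_prop (disch := norm_num)
  have hf0 : f 0 = -3 := by norm_num [f]
  rw [← hf0]
  refine (hf.tendsto.comp (tendsto_inv_atTop_zero.comp tendsto_natCast_atTop_atTop)).congr' ?_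
  filter_upwards [eventually_ge_atTop 4] with n hn
  exact (sum_excess_eq hn).symm

lemma tendsto_sum_excess_sq :
    Tendsto (fun n : ℕ ↦ ∑ k ∈ Icc 1 n, excess n k ^ 2) atTop (𝓝 0) := by
  refine squeeze_zero' (Eventually.of_forall fun n ↦ sum_nonneg fun k _ ↦ sq_nonneg _)
    ?_ (tendsto_const_div_atTop_nhds_zero_nat (57 ^ 2))
  filter_upwards [eventually_ge_atTop 4] with n hn
  have hx : (4 : ℝ) ≤ n := by exact_mod_cast hn
  calc ∑ k ∈ Icc 1 n, excess n k ^ 2 ≤ ∑ k ∈ Icc 1 n, (57 / (n : ℝ)) ^ 2 := by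
        refine sum_le_sum fun k hmem ↦ ?_
        obtain ⟨hk1, hkn⟩ := mem_Icc.mp hmem
        have hk : |excess n k| ≤ 57 / n :=
          abs_excess_le hx (by exact_mod_cast hk1) (by exact_mod_cast hkn)
        obtain ⟨hlo, hhi⟩ := abs_le.mp hk
        exact sq_le_sq' hlo hhi
    _ = 57 ^ 2 / n := by
        simp only [sum_const, Nat.card_Icc, add_tsub_cancel_right, nsmul_eq_mul]
        field_simp

theorem stmt_15 :
    Tendsto (fun n : ℕ =>
        ∏ k ∈ Finset.Icc 1 n,
          (4 * ((n : ℝ) - 1) ^ 4 - (8 * k - 6) * ((n : ℝ) - 1) ^ 2 +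
              4 * (k : ℝ) ^ 2 - 6 * k + 2) / ((n : ℝ) * (n - 1) * (2 * n - 1) ^ 2))
      atTop (nhds (Real.exp (-3))) := by
  exact (tendsto_prod_one_add_of_tendsto_sum tendsto_sum_excess tendsto_sum_excess_sq).congr
    fun n ↦ prod_congr rfl fun k _ ↦ add_sub_cancel _ _
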